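/- Let (Γ, Γ') be a quantized dual graded graph with differential coefficient r over a commutative ring R with distinguished element q, with a unique minimum ∅ (the only vertex of height 0), and with finitely many vertices of each height. For a vertex w with h(w) = m and an integer n ≥ m, let f(∅ → v → w) denote the weight generating function of pairs consisting of a path from ∅ up to v in Γ followed by a path from v down to w in Γ'. Then ∑_{v : h(v) = n} f(∅ → v → w) = r^{n-m} · ([n]_q [n-1]_q ⋯ [m+1]_q) · f_Γ^w. -/

import Mathlib

open scoped Classical

/-- The `q`-integer `[k]_q = 1 + q + ⋯ + q^{k-1}`. -/
def qInt {R : Type*} [CommRing R] (q : R) (k : ℕ) : R :=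
  ∑ j ∈ Finset.range k, q ^ j

/-- The path generating function: the (finite) sum, over all sequences
`src = v₀, v₁, …, v_n = v`, of the products `∏_{i=0}^{n-1} m(vᵢ, vᵢ₊₁)` of edge weights. -/
noncomputable def pathGF {R V : Type*} [CommRing R] (m : V → V → R) (src : V) (n : ℕ)
    (v : V) : R :=
  ∑ᶠ p : {p : Fin (n + 1) → V // p 0 = src ∧ p (Fin.last n) = v},
    ∏ i : Fin n, m (p.1 i.castSucc) (p.1 i.succ)

/-- The up-down path generating function `f(∅ → v → w)`: the sum over pairs consisting of
a path `∅ = v₀, …, v_n = v` going up in `Γ` (with weights `m(vᵢ, vᵢ₊₁)`), and a path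
`w = u_m, …, u_n = v` going down from `v` to `w` in `Γ'` (with weights `m'(u_{j-1}, u_j)`
for the `Γ'`-edge from `u_{j-1}` up to `u_j`), of the product of all these weights.
Here the down path is recorded as a sequence `u : Fin (n - m + 1) → V` with `u 0 = w`
and `u (n-m) = v`. -/
noncomputable def upDownGF {R V : Type*} [CommRing R] (m m' : V → V → R) (src : V)
    (n nm : ℕ) (v w : V) : R :=
  ∑ᶠ p : {p : Fin (n + 1) → V // p 0 = src ∧ p (Fin.last n) = v},
    ∑ᶠ u : {u : Fin (nm + 1) → V // u 0 = w ∧ u (Fin.last nm) = v},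
      (∏ i : Fin n, m (p.1 i.castSucc) (p.1 i.succ)) *
        ∏ j : Fin nm, m' (u.1 j.castSucc) (u.1 j.succ)

/-!
Vertices span the module `V →₀ R`, on which `Γ` acts by the up operator `U` and `Γ'` by the
down operator `D` (the transpose of its own up operator `U'`). Path generating functions are
coordinates: `f_Γ^v = (Uⁿ δ_∅) v`, and summing `f(∅ → v → w)` over `v` pairs `Uⁿ δ_∅` with
`U'ⁿ⁻ᵐ δ_w`, which by adjointness is the `w`-coordinate of `Dⁿ⁻ᵐ Uⁿ δ_∅`. The dual graded graph
relation says `DU = qUD + r` (between vertices of different heights both sides vanish), and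
`D δ_∅ = 0` because nothing lies below `∅`. Hence `D Uᵏ⁺¹ δ_∅ = r [k+1]_q Uᵏ δ_∅`, and iterating
`n - m` times gives `r^{n-m} [n]_q ⋯ [m+1]_q Uᵐ δ_∅`.
-/

open Function

theorem finsum_sigma_of_finite {ι : Type*} {κ : ι → Type*} {M : Type*} [AddCommMonoid M]
    (f : (Σ i, κ i) → M) (hf : (support f).Finite) :
    ∑ᶠ x, f x = ∑ᶠ i, ∑ᶠ k, f ⟨i, k⟩ := by
  classical
  set s := hf.toFinset
  let t (i : ι) : Finset (κ i) := s.preimage (Sigma.mk i) fun _ _ _ _ h => sigma_mk_injective h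
  have hsub : support f ⊆ ↑((s.image Sigma.fst).sigma t) := fun x hx => by
    have hxs : x ∈ s := by simpa [s] using hx
    exact Finset.mem_sigma.2 ⟨Finset.mem_image_of_mem _ hxs, Finset.mem_preimage.2 hxs⟩
  rw [finsum_eq_sum_of_support_subset f hsub, Finset.sum_sigma,
    finsum_eq_sum_of_support_subset (s := s.image Sigma.fst)]
  · exact Finset.sum_congr rfl fun i _ => (finsum_eq_sum_of_support_subset _ fun k hk =>
      Finset.mem_preimage.2 (by simpa [s] using hk)).symm
  · intro i hi
    by_contra hni
    refine hi (finsum_eq_zero_of_forall_eq_zero fun k => ?_)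
    by_contra hk
    exact hni (Finset.mem_image_of_mem Sigma.fst (s := s) (a := ⟨i, k⟩) (by simpa [s] using hk))

section FinsuppPairing

variable {R V : Type*} [CommSemiring R]

theorem Finsupp.finsum_mul_eq_sum (f : V →₀ R) (g : V → R) :
    ∑ᶠ x, f x * g x = f.sum fun x c => c * g x :=
  finsum_eq_sum_of_support_subset _ fun x hx => by simpa using left_ne_zero_of_mul hx

theorem finsum_mul_single_one (f : V → R) (w : V) : ∑ᶠ x, f x * Finsupp.single w 1 x = f w := by
  rw [finsum_eq_single _ w fun x hx => by simp [Ne.symm hx]]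
  simp

end FinsuppPairing

theorem qInt_succ {R : Type*} [CommRing R] (q : R) (k : ℕ) :
    qInt q (k + 1) = q * qInt q k + 1 := by
  rw [qInt, qInt, geom_sum_succ]

section DownUp

variable {R M : Type*} [CommRing R] [AddCommMonoid M] [Module R M] {q r : R}
  {D U : Module.End R M}

theorem down_up_pow_apply (hDU : D * U = q • (U * D) + r • 1) {x : M} (hx : D x = 0) (n : ℕ) :
    D ((U ^ (n + 1)) x) = (r * qInt q (n + 1)) • (U ^ n) x := by
  have hDU_apply (y : M) : D (U y) = q • U (D y) + r • y := LinearMap.congr_fun hDU y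
  induction n with
  | zero => simp [hDU_apply, hx, qInt]
  | succ n ih =>
    rw [pow_succ', Module.End.mul_apply, hDU_apply, ih, map_smul, ← Module.End.mul_apply,
      ← pow_succ', smul_smul, ← add_smul, qInt_succ q (n + 1)]
    congr 1
    ring

theorem down_pow_up_pow_apply (hDU : D * U = q • (U * D) + r • 1) {x : M} (hx : D x = 0)
    (m j : ℕ) :
    (D ^ j) ((U ^ (m + j)) x)
      = (r ^ j * ∏ k ∈ Finset.Icc (m + 1) (m + j), qInt q k) • (U ^ m) x := by
  induction j with
  | zero => simp
  | succ j ih =>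
    rw [pow_succ, Module.End.mul_apply, ← add_assoc, down_up_pow_apply hDU hx, map_smul, ih,
      smul_smul, Finset.prod_Icc_succ_top (by omega)]
    congr 1
    ring

end DownUp

namespace GradedGraph

section Transfer

variable {R V : Type*} [CommSemiring R]

noncomputable def transferOp (m : V → V → R) (hm : ∀ x, (support (m x)).Finite) :
    Module.End R (V →₀ R) :=
  Finsupp.linearCombination R fun x => Finsupp.ofSupportFinite (m x) (hm x)

variable {m : V → V → R} (hm : ∀ x, (support (m x)).Finite)

theorem transferOp_apply (f : V →₀ R) (y : V) :
    transferOp m hm f y = f.sum fun x c => c * m x y := by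
  simp [transferOp, Finsupp.linearCombination_apply, Finsupp.sum_apply,
    Finsupp.ofSupportFinite_coe]

theorem transferOp_apply_eq_finsum (f : V →₀ R) (y : V) :
    transferOp m hm f y = ∑ᶠ x, f x * m x y := by
  rw [transferOp_apply, Finsupp.finsum_mul_eq_sum]

theorem transferOp_single_one (x : V) :
    transferOp m hm (Finsupp.single x 1) = Finsupp.ofSupportFinite (m x) (hm x) := by
  simp [transferOp]

variable (hm' : ∀ y, (support (flip m y)).Finite)

theorem finsum_mul_transferOp (f g : V →₀ R) :
    ∑ᶠ y, g y * transferOp m hm f y = ∑ᶠ x, transferOp (flip m) hm' g x * f x := by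
  rw [Finsupp.finsum_mul_eq_sum, finsum_congr fun x => mul_comm _ (f x),
    Finsupp.finsum_mul_eq_sum]
  simp only [transferOp_apply, Finsupp.mul_sum]
  rw [Finsupp.sum_comm]
  exact Finsupp.sum_congr fun x _ => Finsupp.sum_congr fun y _ => mul_left_comm _ _ _

theorem finsum_mul_transferOp_pow (k : ℕ) (f g : V →₀ R) :
    ∑ᶠ y, g y * (transferOp m hm ^ k) f y = ∑ᶠ x, (transferOp (flip m) hm' ^ k) g x * f x := by
  induction k generalizing f with
  | zero => rfl
  | succ k ih =>
    rw [pow_succ, Module.End.mul_apply, ih, pow_succ', Module.End.mul_apply]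
    exact finsum_mul_transferOp hm hm' f _

end Transfer

variable {R V : Type*} [CommRing R]

abbrev PathTo (src : V) (n : ℕ) (v : V) :=
  {p : Fin (n + 1) → V // p 0 = src ∧ p (Fin.last n) = v}

def pathWeight (m : V → V → R) {n : ℕ} (p : Fin (n + 1) → V) : R :=
  ∏ i : Fin n, m (p i.castSucc) (p i.succ)

theorem pathGF_eq_finsum (m : V → V → R) (src : V) (n : ℕ) (v : V) :
    pathGF m src n v = ∑ᶠ p : PathTo src n v, pathWeight m p.1 := rfl

theorem pathGF_zero (m : V → V → R) (src v : V) :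
    pathGF m src 0 v = Finsupp.single src 1 v := by
  by_cases hv : src = v
  · subst hv
    have : Unique (PathTo src 0 src) := ⟨⟨⟨fun _ => src, rfl, rfl⟩⟩, fun p =>
      Subtype.ext (funext fun i => by
        obtain rfl : i = 0 := Subsingleton.elim (α := Fin 1) _ _
        exact p.2.1)⟩
    rw [pathGF, finsum_unique]
    simp
  · have : IsEmpty (PathTo src 0 v) := ⟨fun p => hv (p.2.1.symm.trans p.2.2)⟩
    rw [pathGF, finsum_of_isEmpty]
    simp [hv]

def pathSnocEquiv (src v : V) (n : ℕ) : PathTo src (n + 1) v ≃ Σ u : V, PathTo src n u where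
  toFun p := ⟨p.1 (Fin.last n).castSucc, Fin.init p.1, p.2.1, rfl⟩
  invFun x := ⟨Fin.snoc x.2.1 v,
    (Fin.snoc_apply_zero (α := fun _ => V) v x.2.1).trans x.2.2.1, by simp⟩
  left_inv := by
    rintro ⟨p, -, rfl⟩
    exact Subtype.ext (Fin.snoc_init_self p)
  right_inv x := Sigma.subtype_ext (by simpa using x.2.2.2) (by simp)

theorem pathWeight_snoc (m : V → V → R) {n : ℕ} (p : Fin (n + 1) → V) (v : V) :
    pathWeight m (Fin.snoc p v : Fin (n + 2) → V) = pathWeight m p * m (p (Fin.last n)) v := by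
  simp [pathWeight, Fin.prod_univ_castSucc, Fin.succ_castSucc, -Fin.castSucc_succ]

def IsGraded (h : V → ℕ) (m : V → V → R) : Prop := ∀ v w, m v w ≠ 0 → h w = h v + 1

section Graded

variable {h : V → ℕ} {m : V → V → R}

theorem IsGraded.height_of_pathWeight_ne_zero (hm : IsGraded h m) {n : ℕ} {p : Fin (n + 1) → V}
    (hp : pathWeight m p ≠ 0) (i : Fin (n + 1)) : h (p i) = h (p 0) + i := by
  induction i using Fin.induction with
  | zero => simp
  | succ i ih =>
    rw [hm _ _ fun h0 => hp (Finset.prod_eq_zero (Finset.mem_univ i) h0), ih]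
    simp [add_assoc]

theorem IsGraded.height_eq_of_pathGF_ne_zero (hm : IsGraded h m) {src : V} {n : ℕ} {v : V}
    (hv : pathGF m src n v ≠ 0) : h v = h src + n := by
  by_contra hne
  refine hv (finsum_eq_zero_of_forall_eq_zero fun p => ?_)
  by_contra hp
  simpa [p.2.1, p.2.2, hne] using hm.height_of_pathWeight_ne_zero hp (Fin.last n)

variable (hfin : ∀ k, {v : V | h v = k}.Finite)
include hfin

theorem IsGraded.finite_support_row (hm : IsGraded h m) (x : V) : (support (m x)).Finite :=
  (hfin (h x + 1)).subset fun y hy => hm x y hy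

theorem IsGraded.finite_support_col (hm : IsGraded h m) (y : V) : (support (flip m y)).Finite :=
  (hfin (h y - 1)).subset fun x hx => by
    have := hm x y hx
    change h x = h y - 1
    omega

theorem IsGraded.finite_support_pathWeight (hm : IsGraded h m) (src : V) (n : ℕ) (v : V) :
    (support fun p : PathTo src n v => pathWeight m p.1).Finite := by
  refine ((Set.Finite.pi fun i : Fin (n + 1) => hfin (h src + i)).preimage
    Subtype.val_injective.injOn).subset fun p hp => ?_
  simpa [← p.2.1] using hm.height_of_pathWeight_ne_zero hp

theorem IsGraded.pathGF_succ (hm : IsGraded h m) (src : V) (n : ℕ) (v : V) :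
    pathGF m src (n + 1) v = ∑ᶠ u, pathGF m src n u * m u v := by
  let e := pathSnocEquiv src v n
  have hsigma : (support fun x => pathWeight m (e.symm x).1).Finite :=
    (hm.finite_support_pathWeight hfin src (n + 1) v).preimage e.symm.injective.injOn
  rw [pathGF_eq_finsum, ← finsum_comp_equiv e.symm, finsum_sigma_of_finite _ hsigma]
  refine finsum_congr fun u => ?_
  rw [pathGF_eq_finsum, finsum_mul' _ _ (hm.finite_support_pathWeight hfin src n u)]
  refine finsum_congr fun p => ?_
  simp [e, pathSnocEquiv, pathWeight_snoc, p.2.2]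

theorem IsGraded.upDownGF_eq_mul {m' : V → V → R} (hm : IsGraded h m) (hm' : IsGraded h m')
    (src : V) (n k : ℕ) (v w : V) :
    upDownGF m m' src n k v w = pathGF m src n v * pathGF m' w k v := by
  rw [upDownGF, pathGF_eq_finsum, finsum_mul' _ _ (hm.finite_support_pathWeight hfin src n v)]
  refine finsum_congr fun p => ?_
  rw [pathGF_eq_finsum, mul_finsum' _ _ (hm'.finite_support_pathWeight hfin w k v)]
  rfl

noncomputable abbrev IsGraded.up (hm : IsGraded h m) : Module.End R (V →₀ R) :=
  transferOp m (hm.finite_support_row hfin)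

noncomputable abbrev IsGraded.down (hm : IsGraded h m) : Module.End R (V →₀ R) :=
  transferOp (flip m) (hm.finite_support_col hfin)

theorem IsGraded.pathGF_eq_up_pow (hm : IsGraded h m) (src : V) (n : ℕ) (v : V) :
    pathGF m src n v = (hm.up hfin ^ n) (Finsupp.single src 1) v := by
  induction n generalizing v with
  | zero => simp [pathGF_zero]
  | succ n ih =>
    rw [hm.pathGF_succ hfin, pow_succ', Module.End.mul_apply, transferOp_apply_eq_finsum]
    simp_rw [ih]

theorem IsGraded.down_single_one_eq_zero (hm : IsGraded h m) {e : V} (he : h e = 0) :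
    hm.down hfin (Finsupp.single e 1) = 0 := by
  ext u
  rw [transferOp_single_one, Finsupp.ofSupportFinite_coe, Finsupp.coe_zero, Pi.zero_apply]
  by_contra hue
  have := hm u e hue
  omega

end Graded

section Dual

variable {q r : R} {h : V → ℕ} {mΓ mΓ' : V → V → R}

theorem dual_relation_of_height_ne (hm : IsGraded h mΓ) (hm' : IsGraded h mΓ') {x u : V}
    (hxu : h x ≠ h u) :
    ∑ᶠ v, mΓ x v * mΓ' u v = q * ∑ᶠ y, mΓ' y x * mΓ y u + r * if x = u then 1 else 0 := by
  have hup : ∀ v, mΓ x v * mΓ' u v = 0 := fun v => by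
    by_contra hv
    have := hm x v (left_ne_zero_of_mul hv)
    have := hm' u v (right_ne_zero_of_mul hv)
    omega
  have hdown : ∀ y, mΓ' y x * mΓ y u = 0 := fun y => by
    by_contra hy
    have := hm' y x (left_ne_zero_of_mul hy)
    have := hm y u (right_ne_zero_of_mul hy)
    omega
  have hne : x ≠ u := fun hx => hxu (congrArg h hx)
  simp [hup, hdown, hne]

theorem down_mul_up (hm : IsGraded h mΓ) (hm' : IsGraded h mΓ')
    (hfin : ∀ k, {v : V | h v = k}.Finite)
    (hdual : ∀ u v : V, h u = h v →
      ∑ᶠ w, mΓ u w * mΓ' v w = q * ∑ᶠ x, mΓ' x u * mΓ x v + r * if u = v then 1 else 0) :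
    hm'.down hfin * hm.up hfin = q • (hm.up hfin * hm'.down hfin) + r • 1 := by
  refine Finsupp.lhom_ext' fun x => LinearMap.ext_ring (Finsupp.ext fun u => ?_)
  have hrel : ∑ᶠ v, mΓ x v * mΓ' u v
      = q * ∑ᶠ y, mΓ' y x * mΓ y u + r * if x = u then 1 else 0 := by
    by_cases hxu : h x = h u
    · exact hdual x u hxu
    · exact dual_relation_of_height_ne hm hm' hxu
  simpa [transferOp_single_one, transferOp_apply_eq_finsum, Finsupp.single_apply,
    Finsupp.ofSupportFinite_coe, flip] using hrel

end Dual

end GradedGraph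

open GradedGraph

theorem stmt_5_general {R V : Type*} [CommRing R] (q r : R) (h : V → ℕ) (mΓ mΓ' : V → V → R)
    -- weights are supported on edges raising height by one
    (hm : ∀ v w, mΓ v w ≠ 0 → h w = h v + 1)
    (hm' : ∀ v w, mΓ' v w ≠ 0 → h w = h v + 1)
    -- finitely many vertices of each height
    (hfin : ∀ k : ℕ, {v : V | h v = k}.Finite)
    -- the quantized dual graded graph relation `DU - qUD = rI`
    (hdual : ∀ u v : V, h u = h v →
      (∑ᶠ w : V, mΓ u w * mΓ' v w)
        = q * (∑ᶠ x : V, mΓ' x u * mΓ x v) + r * (if u = v then 1 else 0))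
    -- `∅` is the unique minimum: the only vertex of height `0`
    (e : V) (he : ∀ v : V, h v = 0 ↔ v = e)
    (w : V) (m n : ℕ) (hmn : m ≤ n) :
    (∑ᶠ v ∈ {v : V | h v = n}, upDownGF mΓ mΓ' e n (n - m) v w)
      = r ^ (n - m) * (∏ k ∈ Finset.Icc (m + 1) n, qInt q k) * pathGF mΓ e m w := by
  have hm : IsGraded h mΓ := hm
  have hm' : IsGraded h mΓ' := hm'
  have he0 : h e = 0 := (he e).2 rfl
  obtain ⟨j, rfl⟩ := Nat.exists_eq_add_of_le hmn
  have hsupp : (support fun v => upDownGF mΓ mΓ' e (m + j) j v w) ⊆ {v | h v = m + j} :=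
    fun v hv => by
      have := hm.height_eq_of_pathGF_ne_zero <| left_ne_zero_of_mul <|
        (hm.upDownGF_eq_mul hfin hm' e (m + j) j v w).symm.trans_ne hv
      rwa [he0, zero_add] at this
  rw [Nat.add_sub_cancel_left, ← finsum_mem_inter_support, Set.inter_eq_right.2 hsupp,
    finsum_mem_support]
  simp_rw [hm.upDownGF_eq_mul hfin hm', hm.pathGF_eq_up_pow hfin, hm'.pathGF_eq_up_pow hfin]
  rw [finsum_mul_transferOp_pow _ (hm'.finite_support_col hfin), finsum_mul_single_one,
    down_pow_up_pow_apply (down_mul_up hm hm' hfin hdual) (hm'.down_single_one_eq_zero hfin he0),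
    Finsupp.smul_apply, smul_eq_mul]

/-- Let `(Γ, Γ')` be a quantized dual graded graph with differential
coefficient `r` over a commutative ring `R` with distinguished element `q`, with a unique
minimum `∅` and finitely many vertices of each height.  For a vertex `w` of height `m`
and `n ≥ m`, the sum over all `v` of height `n` of the up-down path generating functions
`f(∅ → v → w)` equals `r^{n-m} · ([n]_q [n-1]_q ⋯ [m+1]_q) · f_Γ^w`. -/
theorem stmt_5 {R V : Type*} [CommRing R] (q r : R) (h : V → ℕ) (mΓ mΓ' : V → V → R)
    -- weights are supported on edges raising height by one
    (hm : ∀ v w, mΓ v w ≠ 0 → h w = h v + 1)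
    (hm' : ∀ v w, mΓ' v w ≠ 0 → h w = h v + 1)
    -- local finiteness of the two graphs
    (hloc : ∀ v : V, {w | mΓ v w ≠ 0 ∨ mΓ w v ≠ 0 ∨ mΓ' v w ≠ 0 ∨ mΓ' w v ≠ 0}.Finite)
    -- finitely many vertices of each height
    (hfin : ∀ k : ℕ, {v : V | h v = k}.Finite)
    -- the quantized dual graded graph relation `DU - qUD = rI`
    (hdual : ∀ u v : V, h u = h v →
      (∑ᶠ w : V, mΓ u w * mΓ' v w)
        = q * (∑ᶠ x : V, mΓ' x u * mΓ x v) + r * (if u = v then 1 else 0))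
    -- `∅` is the unique minimum: the only vertex of height `0`
    (e : V) (he : ∀ v : V, h v = 0 ↔ v = e)
    (w : V) (m n : ℕ) (hw : h w = m) (hmn : m ≤ n) :
    (∑ᶠ v ∈ {v : V | h v = n}, upDownGF mΓ mΓ' e n (n - m) v w)
      = r ^ (n - m) * (∏ k ∈ Finset.Icc (m + 1) n, qInt q k) * pathGF mΓ e m w :=
  stmt_5_general q r h mΓ mΓ' hm hm' hfin hdual e he w m n hmn
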